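/- Let K be a symmetric (0,2)-tensor of projective weight −4 on an oriented n-manifold M that satisfies the projective Killing equation K_{ij,k} + K_{jk,i} + K_{ki,j} = 0 with respect to (any connection in) a projective class [Γ]. Then for any pseudo-Riemannian metric g whose Levi-Civita connection lies in [Γ], the unweighted symmetric (0,2)-tensor field K̂ := K ⊗ (Vol_g)^{4/(n+1)} is a Killing tensor of g, i.e., it satisfies K̂_{ij,k} + K̂_{jk,i} + K̂_{ki,j} = 0 with respect to the Levi-Civita connection of g. -/

import Mathlib

/-!
By Jacobi's formula, `∂ₖ log |det g| = g^{ab} ∂ₖ g_{ab} = 2 Γ^s_{sk}` for the Levi-Civita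
connection of `g`, so `|det g|^{2/(n+1)}`, the coefficient of `(Vol_g)^{4/(n+1)}`, is a parallel
density of weight `4`. Hence the Levi-Civita Killing operator applied to `K̂` is the weight `-4`
Killing operator of `K` times this density. Under a projective change
`Γ^i_{jk} ↦ Γ^i_{jk} + δ^i_j φ_k + δ^i_k φ_j` the weight `w` Killing operator of a symmetric
tensor changes by `-(w + 4) (φ_k K_{ij} + φ_i K_{jk} + φ_j K_{ki})`, so in weight `-4` it is
projectively invariant and vanishes for the Levi-Civita connection because it does for `Γ`.
-/

open scoped ContDiff

noncomputable section

namespace ProjGeo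

/-- The partial derivative of a function on `ℝⁿ` in the `j`-th coordinate direction. -/
def pd {n : ℕ} (j : Fin n) (f : (Fin n → ℝ) → ℝ) (p : Fin n → ℝ) : ℝ :=
  fderiv ℝ f p (Pi.single j 1)

/-- Christoffel symbols in coordinates: `Γ p i j k` represents `Γ^i_{jk}` at the point `p`. -/
abbrev Christoffel (n : ℕ) := (Fin n → ℝ) → Fin n → Fin n → Fin n → ℝ

/-- A connection is torsion-free (symmetric) if `Γ^i_{jk} = Γ^i_{kj}`. -/
def TorsionFree {n : ℕ} (Γ : Christoffel n) : Prop :=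
  ∀ p i j k, Γ p i j k = Γ p i k j

/-- Smoothness of the Christoffel symbols on the open set `U`. -/
def SmoothChristoffelOn {n : ℕ} (U : Set (Fin n → ℝ)) (Γ : Christoffel n) : Prop :=
  ∀ i j k, ContDiffOn ℝ ∞ (fun p => Γ p i j k) U

/-- `γ` is a (parameterized) geodesic of the connection `Γ` on the parameter set `I`,
staying inside `U`: it is smooth and satisfies `γ̈^i + Γ^i_{jk} γ̇^j γ̇^k = 0`. -/
def IsGeodesicOn {n : ℕ} (U : Set (Fin n → ℝ)) (Γ : Christoffel n)
    (γ : ℝ → Fin n → ℝ) (I : Set ℝ) : Prop :=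
  (∀ t ∈ I, γ t ∈ U) ∧ (∀ i, ContDiffOn ℝ ∞ (fun t => γ t i) I) ∧
  ∀ t ∈ I, ∀ i,
    deriv (fun s => deriv (fun u => γ u i) s) t
      + ∑ j, ∑ k, Γ (γ t) i j k * deriv (fun u => γ u j) t * deriv (fun u => γ u k) t = 0

/-- `h` is a smooth regular reparameterisation defined on `J` and mapping `J` bijectively
onto `I`. -/
def IsReparam (I J : Set ℝ) (h : ℝ → ℝ) : Prop :=
  ContDiffOn ℝ ∞ h J ∧ (∀ t ∈ J, deriv h t ≠ 0) ∧ Set.BijOn h J I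

/-- Two connections are projectively equivalent on `U`: each geodesic of the one is, after a
suitable reparameterisation, a geodesic of the other, and vice versa. -/
def ProjEquivOn {n : ℕ} (U : Set (Fin n → ℝ)) (Γ Γ' : Christoffel n) : Prop :=
  (∀ γ I, IsOpen I → IsGeodesicOn U Γ γ I →
    ∃ h J, IsOpen J ∧ IsReparam I J h ∧ IsGeodesicOn U Γ' (fun t => γ (h t)) J) ∧
  (∀ γ I, IsOpen I → IsGeodesicOn U Γ' γ I →
    ∃ h J, IsOpen J ∧ IsReparam I J h ∧ IsGeodesicOn U Γ (fun t => γ (h t)) J)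

/-- `Γ'` is obtained from `Γ` by the projective change associated with the 1-form `φ`:
`Γ'^i_{jk} = Γ^i_{jk} + φ_k δ^i_j + φ_j δ^i_k` on `U`. -/
def ProjChange {n : ℕ} (Γ Γ' : Christoffel n) (φ : (Fin n → ℝ) → Fin n → ℝ)
    (U : Set (Fin n → ℝ)) : Prop :=
  ∀ p ∈ U, ∀ i j k, Γ' p i j k =
    Γ p i j k + (if i = j then φ p k else 0) + (if i = k then φ p j else 0)

end ProjGeo

namespace ProjGeo

/-- The covariant derivative `K_{ij,k}` of a `(0,2)`-tensor `K` of projective weight `w`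
(in the local trivialization of `(Λₙ)^{w/(n+1)}` by `(dx¹∧⋯∧dxⁿ)^{w/(n+1)}`):
`K_{ij,k} = ∂_k K_{ij} − Γ^s_{ik} K_{sj} − Γ^s_{jk} K_{is} − (w/(n+1)) Γ^s_{sk} K_{ij}`. -/
def covForm2 {n : ℕ} (w : ℝ) (Γ : Christoffel n) (K : (Fin n → ℝ) → Fin n → Fin n → ℝ)
    (p : Fin n → ℝ) (i j k : Fin n) : ℝ :=
  pd k (fun q => K q i j) p - ∑ s, Γ p s i k * K p s j - ∑ s, Γ p s j k * K p i s
    - (w / ((n : ℝ) + 1)) * (∑ s, Γ p s s k) * K p i j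

end ProjGeo

namespace ProjGeo

/-- A (pseudo-Riemannian) metric on `U` in coordinates: a smooth symmetric nondegenerate
matrix-valued function. -/
def MetricOn {n : ℕ} (U : Set (Fin n → ℝ))
    (g : (Fin n → ℝ) → Matrix (Fin n) (Fin n) ℝ) : Prop :=
  (∀ i j, ContDiffOn ℝ ∞ (fun p => g p i j) U) ∧
  (∀ p ∈ U, ∀ i j, g p i j = g p j i) ∧
  (∀ p ∈ U, (g p).det ≠ 0)

/-- A Riemannian (positive definite) metric on `U` in coordinates. -/
def RiemannianOn {n : ℕ} (U : Set (Fin n → ℝ))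
    (g : (Fin n → ℝ) → Matrix (Fin n) (Fin n) ℝ) : Prop :=
  MetricOn U g ∧
  ∀ p ∈ U, ∀ v : Fin n → ℝ, v ≠ 0 → 0 < ∑ i, ∑ j, g p i j * v i * v j

/-- The Christoffel symbols of the Levi-Civita connection of the metric `g`:
`Γ^i_{jk} = ½ g^{is} (∂_j g_{sk} + ∂_k g_{sj} − ∂_s g_{jk})`. -/
def LeviCivita {n : ℕ} (g : (Fin n → ℝ) → Matrix (Fin n) (Fin n) ℝ) : Christoffel n :=
  fun p i j k => (1 / 2) * ∑ s, (g p)⁻¹ i s *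
    (pd j (fun q => g q s k) p + pd k (fun q => g q s j) p - pd s (fun q => g q j k) p)

end ProjGeo

namespace Matrix

variable {𝕜 : Type*} [NontriviallyNormedField 𝕜] {ι : Type*} [Fintype ι] [DecidableEq ι]

variable (𝕜 ι) in
def detRowContinuousMultilinear : ContinuousMultilinearMap 𝕜 (fun _ : ι => ι → 𝕜) 𝕜 :=
  { (detRowAlternating : (ι → 𝕜) [⋀^ι]→ₗ[𝕜] 𝕜).toMultilinearMap with
    cont := continuous_id.matrix_det }

theorem det_updateRow_eq_sum_adjugate (A : Matrix ι ι 𝕜) (a : ι) (v : ι → 𝕜) :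
    (A.updateRow a v).det = ∑ b, A.adjugate b a * v b := by
  rw [← cramer_transpose_apply, cramer_eq_adjugate_mulVec, ← adjugate_transpose]
  rfl

theorem adjugate_eq_det_smul_inv (A : Matrix ι ι 𝕜) (hA : A.det ≠ 0) :
    A.adjugate = A.det • A⁻¹ := by
  rw [inv_def, Ring.inverse_eq_inv, smul_smul, mul_inv_cancel₀ hA, one_smul]

theorem hasFDerivAt_det_comp {E : Type*} [NormedAddCommGroup E] [NormedSpace 𝕜 E]
    {G : E → Matrix ι ι 𝕜} {p : E} (hG : ∀ a b, DifferentiableAt 𝕜 (fun q => G q a b) p) :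
    HasFDerivAt (fun q => (G q).det)
      (∑ a, ∑ b, (G p).adjugate b a • fderiv 𝕜 (fun q => G q a b) p) p := by
  have hrows : HasFDerivAt (fun q (a b : ι) => G q a b)
      (.pi fun a => .pi fun b => fderiv 𝕜 (fun q => G q a b) p) p :=
    hasFDerivAt_pi'' fun a => hasFDerivAt_pi'' fun b => (hG a b).hasFDerivAt
  refine (((detRowContinuousMultilinear 𝕜 ι).hasFDerivAt _).comp p hrows).congr_fderiv ?_
  ext v
  rw [ContinuousLinearMap.comp_apply, ContinuousMultilinearMap.linearDeriv_apply,
    _root_.sum_apply]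
  refine Finset.sum_congr rfl fun a _ => ?_
  change ((G p).updateRow a fun b => fderiv 𝕜 (fun q => G q a b) p v).det = _
  simp [det_updateRow_eq_sum_adjugate, _root_.sum_apply]

end Matrix

namespace ProjGeo

variable {n : ℕ}

theorem pd_mul {f h : (Fin n → ℝ) → ℝ} {p : Fin n → ℝ} (k : Fin n)
    (hf : DifferentiableAt ℝ f p) (hh : DifferentiableAt ℝ h p) :
    pd k (fun q => f q * h q) p = pd k f p * h p + f p * pd k h p := by
  simp only [pd, fderiv_fun_mul hf hh, add_apply, smul_apply, smul_eq_mul]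
  ring

theorem hasFDerivAt_abs_det_rpow {g : (Fin n → ℝ) → Matrix (Fin n) (Fin n) ℝ} {p : Fin n → ℝ}
    (hg : ∀ a b, DifferentiableAt ℝ (fun q => g q a b) p) (hdet : (g p).det ≠ 0) (c : ℝ) :
    HasFDerivAt (fun q => |(g q).det| ^ c)
      ((c * |(g p).det| ^ (c - 1)) • (SignType.sign (g p).det : ℝ) •
        ∑ a, ∑ b, (g p).adjugate b a • fderiv ℝ (fun q => g q a b) p) p :=
  ((Matrix.hasFDerivAt_det_comp hg).abs hdet).rpow_const (Or.inl (abs_ne_zero.mpr hdet))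

theorem pd_abs_det_rpow {g : (Fin n → ℝ) → Matrix (Fin n) (Fin n) ℝ} {p : Fin n → ℝ}
    (hg : ∀ a b, DifferentiableAt ℝ (fun q => g q a b) p) (hdet : (g p).det ≠ 0)
    (c : ℝ) (k : Fin n) :
    pd k (fun q => |(g q).det| ^ c) p
      = c * |(g p).det| ^ c * ∑ a, ∑ b, (g p)⁻¹ b a * pd k (fun q => g q a b) p := by
  rw [pd, (hasFDerivAt_abs_det_rpow hg hdet c).fderiv, Matrix.adjugate_eq_det_smul_inv _ hdet]
  simp only [smul_apply, _root_.sum_apply, smul_eq_mul, Matrix.smul_apply, pd]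
  rw [Real.rpow_sub_one (abs_ne_zero.mpr hdet)]
  simp only [mul_assoc, ← Finset.mul_sum]
  rw [← mul_assoc (SignType.sign _ : ℝ), sign_mul_self]
  field_simp

theorem sum_leviCivita_self {g : (Fin n → ℝ) → Matrix (Fin n) (Fin n) ℝ} {p : Fin n → ℝ}
    (hsymm : (g p).IsSymm) (k : Fin n) :
    ∑ s, LeviCivita g p s s k
      = (1 / 2) * ∑ a, ∑ b, (g p)⁻¹ b a * pd k (fun q => g q a b) p := by
  have hcancel : ∑ s, ∑ a, (g p)⁻¹ s a * pd s (fun q => g q a k) p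
      = ∑ s, ∑ a, (g p)⁻¹ s a * pd a (fun q => g q s k) p := by
    rw [Finset.sum_comm]
    exact Finset.sum_congr rfl fun a _ => Finset.sum_congr rfl fun s _ => by
      rw [hsymm.inv.apply]
  simp only [LeviCivita, ← Finset.mul_sum, mul_add, mul_sub, Finset.sum_add_distrib,
    Finset.sum_sub_distrib, hcancel]
  rw [add_sub_cancel_left, Finset.sum_comm]

theorem pd_abs_det_rpow_eq_trace {g : (Fin n → ℝ) → Matrix (Fin n) (Fin n) ℝ} {p : Fin n → ℝ}
    (hg : ∀ a b, DifferentiableAt ℝ (fun q => g q a b) p) (hdet : (g p).det ≠ 0)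
    (hsymm : (g p).IsSymm) (c : ℝ) (k : Fin n) :
    pd k (fun q => |(g q).det| ^ c) p
      = 2 * c * (∑ s, LeviCivita g p s s k) * |(g p).det| ^ c := by
  rw [pd_abs_det_rpow hg hdet, sum_leviCivita_self hsymm]
  ring

theorem covForm2_mul_of_pd_eq {w w' : ℝ} {Γ : Christoffel n}
    {K : (Fin n → ℝ) → Fin n → Fin n → ℝ} {f : (Fin n → ℝ) → ℝ} {p : Fin n → ℝ}
    (hK : ∀ i j, DifferentiableAt ℝ (fun q => K q i j) p) (hf : DifferentiableAt ℝ f p)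
    (hpd : ∀ k, pd k f p = ((w - w') / ((n : ℝ) + 1)) * (∑ s, Γ p s s k) * f p)
    (i j k : Fin n) :
    covForm2 w Γ (fun q i j => K q i j * f q) p i j k = covForm2 w' Γ K p i j k * f p := by
  simp only [covForm2, pd_mul k (hK i j) hf, hpd, ← mul_assoc, ← Finset.sum_mul]
  ring

theorem covForm2_of_projChange {w : ℝ} {U : Set (Fin n → ℝ)} {Γ Γ' : Christoffel n}
    {φ : (Fin n → ℝ) → Fin n → ℝ} (hΓ : ProjChange Γ Γ' φ U)
    (K : (Fin n → ℝ) → Fin n → Fin n → ℝ) {p : Fin n → ℝ} (hp : p ∈ U) (i j k : Fin n) :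
    covForm2 w Γ' K p i j k = covForm2 w Γ K p i j k
      - (2 + w) * φ p k * K p i j - φ p i * K p k j - φ p j * K p i k := by
  simp only [covForm2, hΓ p hp, add_mul, Finset.sum_add_distrib, ite_mul, zero_mul,
    Finset.sum_ite_eq', Finset.mem_univ, if_true, Finset.sum_const, Finset.card_univ,
    Fintype.card_fin, nsmul_eq_mul]
  have hn : (n : ℝ) + 1 ≠ 0 := by positivity
  field_simp
  ring

def killingOp (w : ℝ) (Γ : Christoffel n) (K : (Fin n → ℝ) → Fin n → Fin n → ℝ)
    (p : Fin n → ℝ) (i j k : Fin n) : ℝ :=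
  covForm2 w Γ K p i j k + covForm2 w Γ K p j k i + covForm2 w Γ K p k i j

theorem killingOp_mul_of_pd_eq {w w' : ℝ} {Γ : Christoffel n}
    {K : (Fin n → ℝ) → Fin n → Fin n → ℝ} {f : (Fin n → ℝ) → ℝ} {p : Fin n → ℝ}
    (hK : ∀ i j, DifferentiableAt ℝ (fun q => K q i j) p) (hf : DifferentiableAt ℝ f p)
    (hpd : ∀ k, pd k f p = ((w - w') / ((n : ℝ) + 1)) * (∑ s, Γ p s s k) * f p)
    (i j k : Fin n) :
    killingOp w Γ (fun q i j => K q i j * f q) p i j k = killingOp w' Γ K p i j k * f p := by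
  simp only [killingOp, covForm2_mul_of_pd_eq hK hf hpd, add_mul]

theorem killingOp_neg_four_of_projChange {U : Set (Fin n → ℝ)} {Γ Γ' : Christoffel n}
    {φ : (Fin n → ℝ) → Fin n → ℝ} (hΓ : ProjChange Γ Γ' φ U)
    {K : (Fin n → ℝ) → Fin n → Fin n → ℝ} {p : Fin n → ℝ} (hp : p ∈ U)
    (hK : ∀ i j, K p i j = K p j i) (i j k : Fin n) :
    killingOp (-4) Γ' K p i j k = killingOp (-4) Γ K p i j k := by
  simp only [killingOp, covForm2_of_projChange hΓ K hp]
  linear_combination 2 * φ p k * hK i j + 2 * φ p i * hK j k + 2 * φ p j * hK k i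

theorem statement_11_general {n : ℕ} (U : Set (Fin n → ℝ)) (hU : IsOpen U)
    (Γ : Christoffel n)
    (K : (Fin n → ℝ) → Fin n → Fin n → ℝ)
    (hKsymm : ∀ p i j, K p i j = K p j i)
    (hKsm : ∀ i j, ContDiffOn ℝ ∞ (fun p => K p i j) U)
    (hKill : ∀ p ∈ U, ∀ i j k,
      covForm2 (-4) Γ K p i j k + covForm2 (-4) Γ K p j k i
        + covForm2 (-4) Γ K p k i j = 0)
    (g : (Fin n → ℝ) → Matrix (Fin n) (Fin n) ℝ) (hg : MetricOn U g)
    (φ : (Fin n → ℝ) → Fin n → ℝ) (hmem : ProjChange Γ (LeviCivita g) φ U)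
    (Khat : (Fin n → ℝ) → Fin n → Fin n → ℝ)
    (hKhat : ∀ p i j, Khat p i j = K p i j * |(g p).det| ^ (2 / ((n : ℝ) + 1))) :
    ∀ p ∈ U, ∀ i j k,
      covForm2 0 (LeviCivita g) Khat p i j k + covForm2 0 (LeviCivita g) Khat p j k i
        + covForm2 0 (LeviCivita g) Khat p k i j = 0 := by
  intro p hp i j k
  have hKp : ∀ a b, DifferentiableAt ℝ (fun q => K q a b) p := fun a b =>
    ((hKsm a b).differentiableOn (by simp)).differentiableAt (hU.mem_nhds hp)
  have hgp : ∀ a b, DifferentiableAt ℝ (fun q => g q a b) p := fun a b =>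
    ((hg.1 a b).differentiableOn (by simp)).differentiableAt (hU.mem_nhds hp)
  have hdet := hg.2.2 p hp
  have hdensity : ∀ k, pd k (fun q => |(g q).det| ^ (2 / ((n : ℝ) + 1))) p
      = ((0 - -4) / ((n : ℝ) + 1)) * (∑ s, LeviCivita g p s s k)
          * |(g p).det| ^ (2 / ((n : ℝ) + 1)) := fun k => by
    rw [pd_abs_det_rpow_eq_trace hgp hdet (Matrix.IsSymm.ext fun a b => hg.2.1 p hp b a)]
    ring
  obtain rfl : Khat = fun q a b => K q a b * |(g q).det| ^ (2 / ((n : ℝ) + 1)) :=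
    funext fun q => funext fun a => funext fun b => hKhat q a b
  change killingOp 0 (LeviCivita g) _ p i j k = 0
  rw [killingOp_mul_of_pd_eq hKp (hasFDerivAt_abs_det_rpow hgp hdet _).differentiableAt
    hdensity, killingOp_neg_four_of_projChange hmem hp (hKsymm p)]
  exact mul_eq_zero_of_left (hKill p hp i j k) _

/-- Let `K` be a symmetric `(0,2)`-tensor of projective weight `−4`
satisfying the projective Killing equation with respect to (any connection in) a projective
class `[Γ]`.  Then for any pseudo-Riemannian metric `g` whose Levi-Civita connection lies in
`[Γ]`, the unweighted tensor `K̂ := K ⊗ (Vol_g)^{4/(n+1)}` (with coefficient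
`K̂_{ij} = K_{ij} |det g|^{2/(n+1)}`) is a Killing tensor of `g`:
`K̂_{ij,k} + K̂_{jk,i} + K̂_{ki,j} = 0` with respect to the Levi-Civita connection of `g`. -/
theorem statement_11 {n : ℕ} (hn : 2 ≤ n) (U : Set (Fin n → ℝ)) (hU : IsOpen U)
    (Γ : Christoffel n) (hTF : TorsionFree Γ) (hsm : SmoothChristoffelOn U Γ)
    (K : (Fin n → ℝ) → Fin n → Fin n → ℝ)
    (hKsymm : ∀ p i j, K p i j = K p j i)
    (hKsm : ∀ i j, ContDiffOn ℝ ∞ (fun p => K p i j) U)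
    (hKill : ∀ p ∈ U, ∀ i j k,
      covForm2 (-4) Γ K p i j k + covForm2 (-4) Γ K p j k i
        + covForm2 (-4) Γ K p k i j = 0)
    (g : (Fin n → ℝ) → Matrix (Fin n) (Fin n) ℝ) (hg : MetricOn U g)
    (φ : (Fin n → ℝ) → Fin n → ℝ) (hmem : ProjChange Γ (LeviCivita g) φ U)
    (Khat : (Fin n → ℝ) → Fin n → Fin n → ℝ)
    (hKhat : ∀ p i j, Khat p i j = K p i j * |(g p).det| ^ (2 / ((n : ℝ) + 1))) :
    ∀ p ∈ U, ∀ i j k,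
      covForm2 0 (LeviCivita g) Khat p i j k + covForm2 0 (LeviCivita g) Khat p j k i
        + covForm2 0 (LeviCivita g) Khat p k i j = 0 :=
  statement_11_general U hU Γ K hKsymm hKsm hKill g hg φ hmem Khat hKhat

end ProjGeo
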